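/- arXiv:1104.3849 — 4 statements merged into one kernel-verified Lean document; each statement's English description precedes it below -/
import Mathlib

section
/- Let U be an open convex domain in ℝⁿ and f : U → ℝ a continuous function. Suppose there is a constant L such that for every q ∈ U there exists a function f_q : U → ℝ that is differentiable at q, satisfies f_q ≤ f on U and f_q(q) = f(q), and whose gradient at q has norm at most L. Then f is Lipschitz on U with Lipschitz constant L. -/
/-!
Restricted to a segment `t ↦ x + t • (y - x)`, the function `f` acquires at every point a
differentiable lower support whose derivative is at least `-L ‖y - x‖`. The slope of `f` to
the right of a point dominates the slope of such a support, so the right lower Dini derivative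
is at least `-L ‖y - x‖`; the fencing theorem for Dini derivatives then gives
`f y ≥ f x - L ‖y - x‖`, and exchanging `x` and `y` gives the Lipschitz bound.
-/

open Set Filter Topology

theorem sub_mul_le_of_forall_lowerSupport {φ : ℝ → ℝ} {a b C : ℝ} (hab : a ≤ b)
    (hφ : ContinuousOn φ (Icc a b))
    (hsupp : ∀ t ∈ Ico a b, ∃ ψ : ℝ → ℝ, ∃ d, HasDerivAt ψ d t ∧ -C ≤ d ∧ ψ t = φ t ∧
      ∀ s ∈ Icc a b, ψ s ≤ φ s) :
    φ a - C * (b - a) ≤ φ b := by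
  have hB : ∀ t, HasDerivAt (fun t ↦ -φ a + C * (t - a)) C t := fun t ↦ by
    simpa using (((hasDerivAt_id t).sub_const a).const_mul C).const_add (-φ a)
  have bound : ∀ t ∈ Ico a b, ∀ r, C < r → ∃ᶠ z in 𝓝[>] t, slope (-φ) t z < r := by
    intro t ht r hr
    obtain ⟨ψ, d, hψ, hd, heq, hle⟩ := hsupp t ht
    have hlim : ∀ᶠ z in 𝓝[>] t, -slope ψ t z < r :=
      (hψ.tendsto_slope.mono_left (nhdsGT_le_nhdsNE t)).neg.eventually_lt_const (by linarith)
    have hslope : ∀ z ∈ Ioc t b, slope ψ t z ≤ slope φ t z := by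
      rintro z ⟨htz, hzb⟩
      rw [slope_def_field, slope_def_field, heq]
      exact div_le_div_of_nonneg_right (by linarith [hle z ⟨by linarith [ht.1], hzb⟩])
        (by linarith)
    refine Eventually.frequently ?_
    filter_upwards [hlim, Ioc_mem_nhdsGT ht.2] with z hz hzI
    simp only [slope_neg_fun, Pi.neg_apply]
    linarith [hslope z hzI]
  have key := image_le_of_liminf_slope_right_le_deriv_boundary hφ.neg (by simp)
    (fun t _ ↦ (hB t).continuousAt.continuousWithinAt) (fun t _ ↦ (hB t).hasDerivWithinAt)
    bound (right_mem_Icc.2 hab)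
  simp only [Pi.neg_apply] at key
  linarith

theorem sub_le_mul_norm_sub_of_forall_lowerSupport {E : Type*} [NormedAddCommGroup E]
    [NormedSpace ℝ E] {U : Set E} {f : E → ℝ} {L : ℝ} (hUc : Convex ℝ U)
    (hf : ContinuousOn f U)
    (hsupp : ∀ q ∈ U, ∃ fq : E → ℝ, DifferentiableAt ℝ fq q ∧ (∀ x ∈ U, fq x ≤ f x) ∧
      fq q = f q ∧ ‖fderiv ℝ fq q‖ ≤ L)
    {x y : E} (hx : x ∈ U) (hy : y ∈ U) :
    f x - f y ≤ L * ‖x - y‖ := by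
  set γ : ℝ → E := fun t ↦ x + t • (y - x)
  have hγU : ∀ t ∈ Icc (0 : ℝ) 1, γ t ∈ U := fun t ht ↦ hUc.add_smul_sub_mem hx hy ht
  have hγ : ∀ t, HasDerivAt γ (y - x) t := fun t ↦ by
    simpa only [one_smul] using ((hasDerivAt_id' t).smul_const (y - x)).const_add x
  have hsegment : ∀ t ∈ Ico (0 : ℝ) 1, ∃ ψ : ℝ → ℝ, ∃ d, HasDerivAt ψ d t ∧
      -(L * ‖y - x‖) ≤ d ∧ ψ t = f (γ t) ∧ ∀ s ∈ Icc (0 : ℝ) 1, ψ s ≤ f (γ s) := by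
    intro t ht
    obtain ⟨fq, hfq, hle, heq, hnorm⟩ := hsupp (γ t) (hγU t (Ico_subset_Icc_self ht))
    refine ⟨fq ∘ γ, fderiv ℝ fq (γ t) (y - x), hfq.hasFDerivAt.comp_hasDerivAt t (hγ t),
      ?_, heq, fun s hs ↦ hle _ (hγU s hs)⟩
    calc -(L * ‖y - x‖) ≤ -(‖fderiv ℝ fq (γ t)‖ * ‖y - x‖) := by gcongr
      _ ≤ -‖fderiv ℝ fq (γ t) (y - x)‖ := neg_le_neg ((fderiv ℝ fq (γ t)).le_opNorm _)
      _ ≤ _ := neg_le_of_abs_le le_rfl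
  have hφ : ContinuousOn (f ∘ γ) (Icc 0 1) :=
    hf.comp (by fun_prop : Continuous γ).continuousOn hγU
  have hline := sub_mul_le_of_forall_lowerSupport zero_le_one hφ hsegment
  simp only [Function.comp_apply, γ, zero_smul, one_smul, add_zero, add_sub_cancel,
    sub_zero, mul_one] at hline
  rw [norm_sub_rev]
  linarith

theorem stmt0_general (n : ℕ) (U : Set (EuclideanSpace ℝ (Fin n)))
    (hUc : Convex ℝ U)
    (f : EuclideanSpace ℝ (Fin n) → ℝ) (hf : ContinuousOn f U)
    (L : ℝ)
    (hsupp : ∀ q ∈ U, ∃ fq : EuclideanSpace ℝ (Fin n) → ℝ,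
      DifferentiableAt ℝ fq q ∧ (∀ x ∈ U, fq x ≤ f x) ∧ fq q = f q ∧
      ‖fderiv ℝ fq q‖ ≤ L) :
    ∀ x ∈ U, ∀ y ∈ U, |f x - f y| ≤ L * ‖x - y‖ := by
  intro x hx y hy
  refine abs_sub_le_iff.2 ⟨?_, ?_⟩
  · exact sub_le_mul_norm_sub_of_forall_lowerSupport hUc hf hsupp hx hy
  · rw [norm_sub_rev]
    exact sub_le_mul_norm_sub_of_forall_lowerSupport hUc hf hsupp hy hx

/-- Lower support functions with uniformly bounded gradients force global
Lipschitz continuity on an open convex domain. -/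
theorem stmt0 (n : ℕ) (U : Set (EuclideanSpace ℝ (Fin n)))
    (hU : IsOpen U) (hUc : Convex ℝ U)
    (f : EuclideanSpace ℝ (Fin n) → ℝ) (hf : ContinuousOn f U)
    (L : ℝ) (hL : 0 ≤ L)
    (hsupp : ∀ q ∈ U, ∃ fq : EuclideanSpace ℝ (Fin n) → ℝ,
      DifferentiableAt ℝ fq q ∧ (∀ x ∈ U, fq x ≤ f x) ∧ fq q = f q ∧
      ‖fderiv ℝ fq q‖ ≤ L) :
    ∀ x ∈ U, ∀ y ∈ U, |f x - f y| ≤ L * ‖x - y‖ :=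
  stmt0_general n U hUc f hf L hsupp
end

section
/- Let 𝔗 ⊆ ℝᵇ be a closed convex cone containing no nonzero linear subspace (𝔗 ∩ (−𝔗) = {0}), and let v, w ∈ 𝔗 with v ≠ 0 and w ≠ 0, and suppose ‖vₙ‖, ‖wₙ‖ → ∞ along sequences vₙ, wₙ ∈ 𝔗 with vₙ/‖vₙ‖ → v/‖v‖ and wₙ/‖wₙ‖ → w/‖w‖. Then min{ ‖vₙ + λ wₙ‖ : λ ∈ [0,1] } → ∞ as n → ∞. -/
/-!
A closed cone `T` containing no line is "acute": there is `c > 0` with `c * ‖a‖ ≤ ‖a + b‖` for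
all `a, b ∈ T`. Indeed, for a unit vector `u ∈ T` the point `-u` lies outside the closed set `T`,
so its distance to `T` is positive, and by compactness of the unit sphere of `T` it is bounded
below by some `c > 0`; scaling extends this to all of `T`. Hence every `‖vₙ + λ wₙ‖` with
`λ ∈ [0, 1]` is at least `c * ‖vₙ‖ → ∞`.
-/

open Filter Metric

section AcuteCone

variable {E : Type*} [NormedAddCommGroup E] {T : Set E}

theorem infDist_neg_pos_of_norm_eq_one (hclosed : IsClosed T) (hline : T ∩ -T ⊆ {0})
    {u : E} (hu : u ∈ T) (hu1 : ‖u‖ = 1) : 0 < infDist (-u) T := by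
  refine (hclosed.notMem_iff_infDist_pos ⟨u, hu⟩).1 fun hneg => ?_
  have hu0 : u = 0 := hline ⟨hu, Set.mem_neg.2 hneg⟩
  simp [hu0] at hu1

theorem exists_pos_le_infDist_neg [NormedSpace ℝ E] [ProperSpace E] (hclosed : IsClosed T)
    (hline : T ∩ -T ⊆ {0}) :
    ∃ c > 0, ∀ u ∈ T, ‖u‖ = 1 → c ≤ infDist (-u) T := by
  have hcompact : IsCompact (T ∩ sphere 0 1) := (isCompact_sphere 0 1).inter_left hclosed
  obtain ⟨c, hc, hle⟩ := hcompact.exists_forall_le'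
    ((continuous_infDist_pt T).comp continuous_neg).continuousOn
    (a := 0) fun u ⟨hu, hu1⟩ =>
      infDist_neg_pos_of_norm_eq_one hclosed hline hu (mem_sphere_zero_iff_norm.1 hu1)
  exact ⟨c, hc, fun u hu hu1 => hle u ⟨hu, mem_sphere_zero_iff_norm.2 hu1⟩⟩

theorem exists_pos_mul_norm_le_norm_add [NormedSpace ℝ E] [ProperSpace E] (hclosed : IsClosed T)
    (hcone : ∀ c : ℝ, 0 ≤ c → ∀ h ∈ T, c • h ∈ T) (hline : T ∩ -T ⊆ {0}) :
    ∃ c > 0, ∀ a ∈ T, ∀ b ∈ T, c * ‖a‖ ≤ ‖a + b‖ := by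
  obtain ⟨c, hc, hle⟩ := exists_pos_le_infDist_neg hclosed hline
  refine ⟨c, hc, fun a ha b hb => ?_⟩
  rcases eq_or_ne a 0 with rfl | ha0
  · simp
  have hna : 0 < ‖a‖ := norm_pos_iff.2 ha0
  set r := ‖a‖⁻¹
  have hr : 0 ≤ r := inv_nonneg.2 hna.le
  have hunit : ‖r • a‖ = 1 := by
    rw [norm_smul, Real.norm_of_nonneg hr, inv_mul_cancel₀ hna.ne']
  have hdist : c ≤ r * ‖a + b‖ :=
    calc c ≤ infDist (-(r • a)) T := hle _ (hcone r hr a ha) hunit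
      _ ≤ dist (-(r • a)) (r • b) := infDist_le_dist_of_mem (hcone r hr b hb)
      _ = r * ‖a + b‖ := by
        rw [dist_eq_norm, ← norm_neg, neg_sub, sub_neg_eq_add, ← smul_add, norm_smul,
          Real.norm_of_nonneg hr, add_comm]
  calc c * ‖a‖ ≤ r * ‖a + b‖ * ‖a‖ := mul_le_mul_of_nonneg_right hdist hna.le
    _ = ‖a + b‖ := by rw [mul_right_comm, inv_mul_cancel₀ hna.ne', one_mul]

end AcuteCone

theorem stmt5_general (n : ℕ) (T : Set (EuclideanSpace ℝ (Fin n)))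
    (hclosed : IsClosed T)
    (hcone : ∀ c : ℝ, 0 ≤ c → ∀ h ∈ T, c • h ∈ T)
    (hline : T ∩ (-T) = {0})
    (vn wn : ℕ → EuclideanSpace ℝ (Fin n))
    (hvn : ∀ k, vn k ∈ T) (hwn : ∀ k, wn k ∈ T)
    (hvnorm : Filter.Tendsto (fun k => ‖vn k‖) Filter.atTop Filter.atTop) :
    Filter.Tendsto
      (fun k => sInf {r : ℝ | ∃ l ∈ Set.Icc (0:ℝ) 1, r = ‖vn k + l • wn k‖})
      Filter.atTop Filter.atTop := by
  obtain ⟨c, hc, hacute⟩ := exists_pos_mul_norm_le_norm_add hclosed hcone hline.subset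
  refine tendsto_atTop_mono (fun k => le_csInf ⟨_, 0, ⟨le_rfl, zero_le_one⟩, rfl⟩ ?_)
    (hvnorm.const_mul_atTop hc)
  rintro r ⟨l, ⟨hl0, -⟩, rfl⟩
  exact hacute _ (hvn k) _ (hcone l hl0 _ (hwn k))

/-- If `vₙ, wₙ` lie in a closed convex cone containing no line, with norms
tending to infinity and directions converging to directions of nonzero cone
elements, then `min_{λ∈[0,1]} ‖vₙ + λwₙ‖ → ∞`. -/
theorem stmt5 (n : ℕ) (T : Set (EuclideanSpace ℝ (Fin n)))
    (hclosed : IsClosed T) (hconv : Convex ℝ T)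
    (hcone : ∀ c : ℝ, 0 ≤ c → ∀ h ∈ T, c • h ∈ T)
    (hline : T ∩ (-T) = {0})
    (v w : EuclideanSpace ℝ (Fin n)) (hv : v ∈ T) (hw : w ∈ T)
    (hv0 : v ≠ 0) (hw0 : w ≠ 0)
    (vn wn : ℕ → EuclideanSpace ℝ (Fin n))
    (hvn : ∀ k, vn k ∈ T) (hwn : ∀ k, wn k ∈ T)
    (hvnorm : Filter.Tendsto (fun k => ‖vn k‖) Filter.atTop Filter.atTop)
    (hwnorm : Filter.Tendsto (fun k => ‖wn k‖) Filter.atTop Filter.atTop)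
    (hvdir : Filter.Tendsto (fun k => ‖vn k‖⁻¹ • vn k) Filter.atTop (nhds (‖v‖⁻¹ • v)))
    (hwdir : Filter.Tendsto (fun k => ‖wn k‖⁻¹ • wn k) Filter.atTop (nhds (‖w‖⁻¹ • w))) :
    Filter.Tendsto
      (fun k => sInf {r : ℝ | ∃ l ∈ Set.Icc (0:ℝ) 1, r = ‖vn k + l • wn k‖})
      Filter.atTop Filter.atTop :=
  stmt5_general n T hclosed hcone hline vn wn hvn hwn hvnorm
end

section
/- Let 𝔗 ⊆ ℝᵇ be a closed convex cone and 𝔩 : 𝔗 → ℝ concave and positively 1-homogeneous. Suppose there exist constants ε₅ > 0 and h₀ ∈ 𝔗 \ {0} and a sequence hₙ ∈ 𝔗 with hₙ → λh₀ for some λ > 0, such that 𝔩(hₙ) ≥ ε₅ √(dist(hₙ, ℝ₊ h₀)) and dist(hₙ, ℝ₊h₀) > 0 for all n. Then no linear functional α with α ≥ 𝔩 on 𝔗 can satisfy α(h₀) = 0. -/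
/-!
Since `α` vanishes on `h₀`, it vanishes on the whole ray `ℝ₊h₀`, and being Lipschitz it is then
bounded by `‖α‖ · dist(h, ℝ₊h₀)`. Along `hₙ` this distance tends to `0`, and the lower bound
`ε₅ √d ≤ 𝔩(hₙ) ≤ α(hₙ) ≤ ‖α‖ d` forces `ε₅ ≤ ‖α‖ √d → 0`, contradicting `ε₅ > 0`.
-/

open Filter Metric Topology

lemma LipschitzWith.abs_le_mul_infDist {X : Type*} [PseudoMetricSpace X] {f : X → ℝ}
    {K : NNReal} (hf : LipschitzWith K f) {s : Set X} (hs : s.Nonempty)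
    (hfs : ∀ y ∈ s, f y = 0) (x : X) : |f x| ≤ K * infDist x s := by
  have : Nonempty s := hs.to_subtype
  rw [infDist_eq_iInf, Real.mul_iInf_of_nonneg K.coe_nonneg]
  refine le_ciInf fun y => ?_
  simpa [hfs y y.2, Real.dist_eq] using hf.dist_le_mul x y

lemma Filter.Tendsto.infDist_tendsto_zero {X ι : Type*} [PseudoMetricSpace X] {l : Filter ι}
    {u : ι → X} {a : X} {s : Set X} (hu : Tendsto u l (𝓝 a)) (ha : a ∈ s) :
    Tendsto (fun i => infDist (u i) s) l (𝓝 0) := by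
  simpa [infDist_zero_of_mem ha, Function.comp_def] using ((continuous_infDist_pt s).tendsto a).comp hu

lemma nonpos_of_mul_sqrt_le_mul {ι : Type*} {l : Filter ι} [l.NeBot] {d : ι → ℝ}
    (hd : Tendsto d l (𝓝 0)) (hpos : ∀ᶠ i in l, 0 < d i) {ε C : ℝ}
    (hle : ∀ᶠ i in l, ε * √(d i) ≤ C * d i) : ε ≤ 0 := by
  have hsqrt : Tendsto (fun i => C * √(d i)) l (𝓝 0) := by
    simpa using ((Real.continuous_sqrt.tendsto 0).comp hd).const_mul C
  refine ge_of_tendsto hsqrt ?_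
  filter_upwards [hpos, hle] with i hi hεC
  have hs : 0 < √(d i) := Real.sqrt_pos.mpr hi
  have hsq : C * d i = C * √(d i) * √(d i) := by rw [mul_assoc, Real.mul_self_sqrt hi.le]
  exact le_of_mul_le_mul_right (hsq ▸ hεC) hs

theorem stmt7_general (n : ℕ) (T : Set (EuclideanSpace ℝ (Fin n)))
    (l : EuclideanSpace ℝ (Fin n) → ℝ)
    (ε₅ : ℝ) (hε₅ : 0 < ε₅)
    (h₀ : EuclideanSpace ℝ (Fin n))
    (hn : ℕ → EuclideanSpace ℝ (Fin n)) (hhn : ∀ k, hn k ∈ T)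
    (lam : ℝ) (hlam : 0 < lam)
    (hconv' : Filter.Tendsto hn Filter.atTop (nhds (lam • h₀)))
    (hgrow : ∀ k, ε₅ * Real.sqrt
        (Metric.infDist (hn k) {x | ∃ c : ℝ, 0 ≤ c ∧ x = c • h₀}) ≤ l (hn k))
    (hpos : ∀ k, 0 < Metric.infDist (hn k) {x | ∃ c : ℝ, 0 ≤ c ∧ x = c • h₀}) :
    ∀ α : EuclideanSpace ℝ (Fin n) →L[ℝ] ℝ, (∀ h ∈ T, l h ≤ α h) → α h₀ ≠ 0 := by
  intro α hle hα₀
  set S : Set (EuclideanSpace ℝ (Fin n)) := {x | ∃ c : ℝ, 0 ≤ c ∧ x = c • h₀}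
  have hlimS : lam • h₀ ∈ S := ⟨lam, hlam.le, rfl⟩
  have hαS : ∀ x ∈ S, α x = 0 := by
    rintro x ⟨c, -, rfl⟩
    simp [hα₀]
  have hlinear : ∀ k, ε₅ * √(infDist (hn k) S) ≤ ‖α‖ * infDist (hn k) S := fun k =>
    calc ε₅ * √(infDist (hn k) S) ≤ l (hn k) := hgrow k
      _ ≤ α (hn k) := hle _ (hhn k)
      _ ≤ |α (hn k)| := le_abs_self _
      _ ≤ ‖α‖ * infDist (hn k) S := α.lipschitz.abs_le_mul_infDist ⟨_, hlimS⟩ hαS _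
  have := nonpos_of_mul_sqrt_le_mul (hconv'.infDist_tendsto_zero hlimS)
    (.of_forall hpos) (.of_forall hlinear)
  linarith

/-- The growth `𝔩(hₙ) ≥ ε₅√(dist(hₙ, ℝ₊h₀))` along a sequence converging to a
positive multiple of `h₀` rules out any linear support function of `𝔩`
vanishing at `h₀`. -/
theorem stmt7 (n : ℕ) (T : Set (EuclideanSpace ℝ (Fin n)))
    (hclosed : IsClosed T) (hconv : Convex ℝ T)
    (hcone : ∀ c : ℝ, 0 ≤ c → ∀ h ∈ T, c • h ∈ T)
    (l : EuclideanSpace ℝ (Fin n) → ℝ)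
    (hconc : ConcaveOn ℝ T l)
    (hhom : ∀ c : ℝ, 0 ≤ c → ∀ h ∈ T, l (c • h) = c * l h)
    (ε₅ : ℝ) (hε₅ : 0 < ε₅)
    (h₀ : EuclideanSpace ℝ (Fin n)) (hh₀ : h₀ ∈ T) (hh₀0 : h₀ ≠ 0)
    (hn : ℕ → EuclideanSpace ℝ (Fin n)) (hhn : ∀ k, hn k ∈ T)
    (lam : ℝ) (hlam : 0 < lam)
    (hconv' : Filter.Tendsto hn Filter.atTop (nhds (lam • h₀)))
    (hgrow : ∀ k, ε₅ * Real.sqrt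
        (Metric.infDist (hn k) {x | ∃ c : ℝ, 0 ≤ c ∧ x = c • h₀}) ≤ l (hn k))
    (hpos : ∀ k, 0 < Metric.infDist (hn k) {x | ∃ c : ℝ, 0 ≤ c ∧ x = c • h₀}) :
    ∀ α : EuclideanSpace ℝ (Fin n) →L[ℝ] ℝ, (∀ h ∈ T, l h ≤ α h) → α h₀ ≠ 0 :=
  stmt7_general n T l ε₅ hε₅ h₀ hn hhn lam hlam hconv' hgrow hpos
end

section
/- Let D ⊆ ℝᵇ be a compact convex set, f : D → ℝ continuous concave with f ≥ 0, and suppose every affine function β on D with β ≥ f that touches f at some point of D satisfies β > 0 on D. Let K := {(h,t) : h ∈ D, 0 ≤ t ≤ f(h)}. Then every extreme point (h', t') of K with t' = f(h') that appears with positive coefficient in a convex-combination representation of a point (h, f(h)) with h ∈ relint(D) satisfies f(h') > 0. -/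
/-!
At a point `h` of the relative interior of `D`, the concave function `f` has an affine majorant
`β` touching it at `h`: inside the affine span of `D`, separate `(h, f h)` from the open strict
hypograph of `f`. A convex combination of points on or below the graph of `β` that lands on the
graph of `β` uses only points on that graph, so each graph point `(h', f h')` occurring in a
decomposition of `(h, f h)` satisfies `f h' = β h' > 0`.
-/

open Set

section Support

variable {E : Type*} [TopologicalSpace E] [AddCommGroup E] [IsTopologicalAddGroup E]
  [Module ℝ E] [ContinuousSMul ℝ E] {s : Set E} {g : E → ℝ} {x : E}

lemma ConcaveOn.le_add_of_le_add_on_interior (hg : ConcaveOn ℝ s g) (hx : x ∈ interior s)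
    (L : E →ₗ[ℝ] ℝ) (hL : ∀ y ∈ interior s, g y ≤ g x + L (y - x)) :
    ∀ y ∈ s, g y ≤ g x + L (y - x) := by
  intro y hy
  have hmid : (1 / 2 : ℝ) • x + (1 / 2 : ℝ) • y ∈ interior s :=
    hg.1.combo_interior_self_mem_interior hx hy (by norm_num) (by norm_num) (by norm_num)
  have hconc := hg.2 (interior_subset hx) hy (by norm_num : (0 : ℝ) ≤ 1 / 2)
    (by norm_num : (0 : ℝ) ≤ 1 / 2) (by norm_num)
  have hsub : (1 / 2 : ℝ) • x + (1 / 2 : ℝ) • y - x = (1 / 2 : ℝ) • (y - x) := by module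
  have := hL _ hmid
  rw [hsub, map_smul, smul_eq_mul] at this
  simp only [smul_eq_mul] at hconc
  linarith

lemma ConcaveOn.exists_le_add_of_mem_interior (hg : ConcaveOn ℝ s g)
    (hcont : ContinuousOn g (interior s)) (hx : x ∈ interior s) :
    ∃ L : E →L[ℝ] ℝ, ∀ y ∈ s, g y ≤ g x + L (y - x) := by
  set O : Set (E × ℝ) := {q | q.1 ∈ interior s ∧ q.2 < g q.1}
  have hOconv : Convex ℝ O :=
    (hg.subset interior_subset hg.1.interior).convex_strict_hypograph
  have hOopen : IsOpen O := by
    have hO : O = Prod.fst ⁻¹' interior s ∩ (fun q : E × ℝ => g q.1 - q.2) ⁻¹' Ioi 0 := by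
      ext q
      simp [O, sub_pos]
    rw [hO]
    exact ((hcont.comp continuousOn_fst fun q hq => hq).sub continuousOn_snd).isOpen_inter_preimage
      (isOpen_interior.preimage continuous_fst) isOpen_Ioi
  obtain ⟨φ, hφ⟩ := geometric_hahn_banach_open_point hOconv hOopen
    (fun h : (x, g x) ∈ O => lt_irrefl _ h.2)
  set ψ : E →L[ℝ] ℝ := φ.comp (ContinuousLinearMap.inl ℝ E ℝ)
  set c : ℝ := φ (0, 1)
  have hφ_apply : ∀ y t, φ (y, t) = ψ y + t * c := by
    intro y t
    have hyt : ((y, t) : E × ℝ) = (y, 0) + t • (0, 1) := by simp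
    rw [hyt, map_add, map_smul, smul_eq_mul]
    rfl
  have hc : 0 < c := by
    have := hφ (x, g x - 1) ⟨hx, by linarith⟩
    rw [hφ_apply, hφ_apply] at this
    linarith
  refine ⟨-c⁻¹ • ψ, hg.le_add_of_le_add_on_interior hx _ fun y hy => ?_⟩
  refine le_of_forall_lt fun t ht => ?_
  have := hφ (y, t) ⟨hy, ht⟩
  rw [hφ_apply, hφ_apply] at this
  have key : t * c < (g x + (-c⁻¹ • ψ) (y - x)) * c := by
    simp only [smul_apply, map_sub, smul_eq_mul]
    field_simp
    linarith
  exact lt_of_mul_lt_mul_right key hc.le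

end Support

lemma ConcaveOn.exists_affineMap_ge_eq_of_mem_intrinsicInterior {E : Type*} [NormedAddCommGroup E]
    [NormedSpace ℝ E] [FiniteDimensional ℝ E] {D : Set E} {f : E → ℝ}
    (hf : ConcaveOn ℝ D f) {h : E} (hh : h ∈ intrinsicInterior ℝ D) :
    ∃ β : E →ᵃ[ℝ] ℝ, (∀ x ∈ D, f x ≤ β x) ∧ β h = f h := by
  set V := (affineSpan ℝ D).direction
  set S : Set V := {v | h + (v : E) ∈ D}
  have hg : ConcaveOn ℝ S fun v : V => f (h + v) := (hf.translate_right h).comp_linearMap V.subtype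
  have h0 : (0 : V) ∈ interior S := by
    obtain ⟨y, hy, rfl⟩ := hh
    have : Nonempty (affineSpan ℝ D) := ⟨y⟩
    have hcont : Continuous fun v : V => v +ᵥ y := by fun_prop
    refine mem_interior_iff_mem_nhds.2 (Filter.mem_of_superset
      (hcont.continuousAt.preimage_mem_nhds (by simpa using isOpen_interior.mem_nhds hy)) ?_)
    intro v hv
    have hv' : ((v +ᵥ y : affineSpan ℝ D) : E) ∈ D := hv
    rwa [AffineSubspace.coe_vadd, vadd_eq_add, add_comm] at hv'
  obtain ⟨L, hL⟩ := hg.exists_le_add_of_mem_interior hg.continuousOn_interior h0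
  obtain ⟨L', hL'⟩ := LinearMap.exists_extend (L : V →ₗ[ℝ] ℝ)
  refine ⟨L'.toAffineMap + AffineMap.const ℝ E (f h - L' h), fun x hx => ?_, by simp⟩
  have hxV : x - h ∈ V := AffineSubspace.vsub_mem_direction (subset_affineSpan ℝ D hx)
    (subset_affineSpan ℝ D (intrinsicInterior_subset hh))
  have hLx : L ⟨x - h, hxV⟩ = L' (x - h) := (LinearMap.congr_fun hL' _).symm
  have := hL ⟨x - h, hxV⟩ (by simpa [S] using hx)
  simp only [add_sub_cancel, sub_zero, hLx, ZeroMemClass.coe_zero, add_zero, map_sub] at this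
  simp only [AffineMap.coe_add, LinearMap.coe_toAffineMap, AffineMap.coe_const, Pi.add_apply,
    Function.const_apply]
  linarith

lemma AffineMap.snd_eq_of_sum_smul_eq_graph {ι E : Type*} [Fintype ι] [AddCommGroup E] [Module ℝ E]
    (β : E →ᵃ[ℝ] ℝ) {p : ι → E × ℝ} {lam : ι → ℝ} (hlam : ∀ i, 0 < lam i) (hlam1 : ∑ i, lam i = 1)
    (hle : ∀ i, (p i).2 ≤ β (p i).1) {y : E} (hsum : ∑ i, lam i • p i = (y, β y)) :
    ∀ i, (p i).2 = β (p i).1 := by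
  have hfst : ∑ i, lam i • (p i).1 = y := by simpa [Prod.fst_sum] using congrArg Prod.fst hsum
  have hsnd : ∑ i, lam i * (p i).2 = β y := by simpa [Prod.snd_sum] using congrArg Prod.snd hsum
  have hjensen : ∑ i, lam i * β (p i).1 ≤ β y := by
    simpa [hfst] using ((concaveOn_id convex_univ).comp_affineMap β).le_map_sum
      (t := Finset.univ) (fun i _ => (hlam i).le) hlam1 (fun i _ => mem_univ (p i).1)
  have hterm : ∀ i ∈ Finset.univ, lam i * (p i).2 ≤ lam i * β (p i).1 :=
    fun i _ => mul_le_mul_of_nonneg_left (hle i) (hlam i).le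
  have heq := (Finset.sum_eq_sum_iff_of_le hterm).1
    (le_antisymm (Finset.sum_le_sum hterm) (hjensen.trans hsnd.ge))
  exact fun i => mul_left_cancel₀ (hlam i).ne' (heq i (Finset.mem_univ i))

theorem stmt15_general (n : ℕ) (D : Set (EuclideanSpace ℝ (Fin n)))
    (f : EuclideanSpace ℝ (Fin n) → ℝ)
    (hconc : ConcaveOn ℝ D f)
    (hsupp : ∀ β : EuclideanSpace ℝ (Fin n) →ᵃ[ℝ] ℝ,
      (∀ x ∈ D, f x ≤ β x) → (∃ x ∈ D, β x = f x) → ∀ x ∈ D, 0 < β x)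
    (K : Set (EuclideanSpace ℝ (Fin n) × ℝ))
    (hK : K = {p | p.1 ∈ D ∧ 0 ≤ p.2 ∧ p.2 ≤ f p.1}) :
    ∀ h ∈ intrinsicInterior ℝ D,
      ∀ (m : ℕ) (p : Fin m → EuclideanSpace ℝ (Fin n) × ℝ) (lam : Fin m → ℝ),
        (∀ i, 0 < lam i) → (∑ i, lam i = 1) →
        (∀ i, p i ∈ Set.extremePoints ℝ K) →
        (∑ i, lam i • p i = (h, f h)) →
        ∀ i, (p i).2 = f ((p i).1) → 0 < f ((p i).1) := by
  intro h hh m p lam hlam hlam1 hext hsum i hgraph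
  obtain ⟨β, hβf, hβh⟩ := hconc.exists_affineMap_ge_eq_of_mem_intrinsicInterior hh
  have hβpos := hsupp β hβf ⟨h, intrinsicInterior_subset hh, hβh⟩
  have hpK : ∀ j, (p j).1 ∈ D ∧ 0 ≤ (p j).2 ∧ (p j).2 ≤ f (p j).1 := by
    simpa [hK] using fun j => (hext j).1
  have hon_β := β.snd_eq_of_sum_smul_eq_graph hlam hlam1
    (fun j => (hpK j).2.2.trans (hβf _ (hpK j).1)) (hsum.trans (by rw [hβh]))
  rw [← hgraph, hon_β i]
  exact hβpos _ (hpK i).1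

/-- If every affine support function of a nonnegative continuous concave `f` on
a compact convex `D` is strictly positive on `D`, then any extreme point of
the hypograph body `K` lying on the graph of `f` and appearing with positive
coefficient in a convex decomposition of a graph point over `relint D` has
strictly positive `f`-value. -/
theorem stmt15 (n : ℕ) (D : Set (EuclideanSpace ℝ (Fin n)))
    (hD : IsCompact D) (hDc : Convex ℝ D)
    (f : EuclideanSpace ℝ (Fin n) → ℝ)
    (hcont : ContinuousOn f D) (hconc : ConcaveOn ℝ D f)
    (hnn : ∀ x ∈ D, 0 ≤ f x)
    (hsupp : ∀ β : EuclideanSpace ℝ (Fin n) →ᵃ[ℝ] ℝ,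
      (∀ x ∈ D, f x ≤ β x) → (∃ x ∈ D, β x = f x) → ∀ x ∈ D, 0 < β x)
    (K : Set (EuclideanSpace ℝ (Fin n) × ℝ))
    (hK : K = {p | p.1 ∈ D ∧ 0 ≤ p.2 ∧ p.2 ≤ f p.1}) :
    ∀ h ∈ intrinsicInterior ℝ D,
      ∀ (m : ℕ) (p : Fin m → EuclideanSpace ℝ (Fin n) × ℝ) (lam : Fin m → ℝ),
        (∀ i, 0 < lam i) → (∑ i, lam i = 1) →
        (∀ i, p i ∈ Set.extremePoints ℝ K) →
        (∑ i, lam i • p i = (h, f h)) →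
        ∀ i, (p i).2 = f ((p i).1) → 0 < f ((p i).1) :=
  stmt15_general n D f hconc hsupp K hK
end
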